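/- arXiv:math/0506169 — 4 statements merged into one kernel-verified Lean document; each statement's English description precedes it below -/
import Mathlib

section
/- Let 0<q<1 be a real number, let r≥1 be an integer, let f≥1 be an integer and let χ be a Dirichlet character modulo f with values in ℂ. Then for every complex number s with Re(s) > 0, (1/Γ(s)) ∫₀^∞ t^{s−1} ( Σ_{n₁,...,n_r≥1} χ(n₁+⋯+n_r) q^{n₁+⋯+n_r} e^{−[n₁+⋯+n_r]_q t} ) dt = L_q^r(s,χ), where Γ is the complex Gamma function and both the inner series and the integral converge absolutely. -/
open MeasureTheory

/-- The `q`-analogue `[x]_q = (1 - q^x)/(1 - q)` of a real number `x`. -/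
noncomputable def qNum (q x : ℝ) : ℝ := (1 - q ^ x) / (1 - q)

/-!
Writing `|n| = n₁ + ⋯ + n_r`, `a_n = χ(|n|) q^{|n|}` and `p_n = [|n|]_q`, the integrand is
`t^{s-1} Σ a_n e^{-p_n t}`. Since `|χ| ≤ 1` and `q < 1`, the coefficients are absolutely
summable over `(ℕ+)^r`, and since `|n| ≥ r ≥ 1` the exponents satisfy `p_n ≥ 1`; hence the
series is dominated by `(Σ ‖a_n‖) e^{-t}`, which makes `t^{s-1}` times it integrable on
`(0, ∞)`, and the termwise Mellin transform `∫₀^∞ t^{s-1} e^{-p t} dt = Γ(s) p^{-s}` may be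
summed.
-/

lemma norm_mul_cexp_neg_mul_le (a : ℂ) {p t : ℝ} (hp : 1 ≤ p) (ht : 0 ≤ t) :
    ‖a * Complex.exp (-(p : ℂ) * t)‖ ≤ ‖a‖ * Real.exp (-t) := by
  rw [norm_mul, ← Complex.ofReal_neg, ← Complex.ofReal_mul, Complex.norm_exp_ofReal]
  gcongr
  nlinarith

section ExponentialSeries

variable {ι : Type*} {a : ι → ℂ} {p : ι → ℝ}

lemma summable_norm_mul_cexp_neg_mul (ha : Summable (‖a ·‖)) (hp : ∀ i, 1 ≤ p i)
    {t : ℝ} (ht : 0 ≤ t) :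
    Summable fun i => ‖a i * Complex.exp (-(p i : ℂ) * t)‖ :=
  .of_nonneg_of_le (fun _ => norm_nonneg _) (fun i => norm_mul_cexp_neg_mul_le _ (hp i) ht)
    (ha.mul_right _)

lemma norm_tsum_mul_cexp_neg_mul_le (ha : Summable (‖a ·‖)) (hp : ∀ i, 1 ≤ p i)
    {t : ℝ} (ht : 0 ≤ t) :
    ‖∑' i, a i * Complex.exp (-(p i : ℂ) * t)‖ ≤ (∑' i, ‖a i‖) * Real.exp (-t) := by
  calc ‖∑' i, a i * Complex.exp (-(p i : ℂ) * t)‖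
      ≤ ∑' i, ‖a i * Complex.exp (-(p i : ℂ) * t)‖ :=
        norm_tsum_le_tsum_norm (summable_norm_mul_cexp_neg_mul ha hp ht)
    _ ≤ ∑' i, ‖a i‖ * Real.exp (-t) :=
        (summable_norm_mul_cexp_neg_mul ha hp ht).tsum_le_tsum
          (fun i => norm_mul_cexp_neg_mul_le _ (hp i) ht) (ha.mul_right _)
    _ = (∑' i, ‖a i‖) * Real.exp (-t) := tsum_mul_right

lemma continuousOn_tsum_mul_cexp_neg_mul (ha : Summable (‖a ·‖)) (hp : ∀ i, 1 ≤ p i) :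
    ContinuousOn (fun t : ℝ => ∑' i, a i * Complex.exp (-(p i : ℂ) * t)) (Set.Ici 0) := by
  refine continuousOn_tsum (fun i => by fun_prop) ha fun i t (ht : 0 ≤ t) => ?_
  calc ‖a i * Complex.exp (-(p i : ℂ) * t)‖ ≤ ‖a i‖ * Real.exp (-t) :=
        norm_mul_cexp_neg_mul_le _ (hp i) ht
    _ ≤ ‖a i‖ := mul_le_of_le_one_right (norm_nonneg _) (Real.exp_le_one_iff.mpr (by linarith))

lemma integrableOn_cpow_mul_tsum_mul_cexp_neg_mul (ha : Summable (‖a ·‖)) (hp : ∀ i, 1 ≤ p i)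
    {s : ℂ} (hs : 0 < s.re) :
    IntegrableOn (fun t : ℝ => (t : ℂ) ^ (s - 1) * ∑' i, a i * Complex.exp (-(p i : ℂ) * t))
      (Set.Ioi 0) := by
  refine ((Real.GammaIntegral_convergent hs).const_mul (∑' i, ‖a i‖)).mono' ?_ ?_
  · refine ContinuousOn.aestronglyMeasurable (fun t (ht : 0 < t) => ?_) measurableSet_Ioi
    exact ((Complex.continuousAt_ofReal_cpow_const t _ (.inr ht.ne')).continuousWithinAt).mul
      ((continuousOn_tsum_mul_cexp_neg_mul ha hp).mono Set.Ioi_subset_Ici_self t ht)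
  · filter_upwards [ae_restrict_mem measurableSet_Ioi] with t (ht : 0 < t)
    rw [norm_mul, Complex.norm_cpow_eq_rpow_re_of_pos ht, Complex.sub_re, Complex.one_re]
    calc t ^ (s.re - 1) * ‖∑' i, a i * Complex.exp (-(p i : ℂ) * t)‖
        ≤ t ^ (s.re - 1) * ((∑' i, ‖a i‖) * Real.exp (-t)) :=
          mul_le_mul_of_nonneg_left (norm_tsum_mul_cexp_neg_mul_le ha hp ht.le) (by positivity)
      _ = (∑' i, ‖a i‖) * (Real.exp (-t) * t ^ (s.re - 1)) := by ring

lemma one_div_Gamma_mul_mellin_tsum_mul_cexp_neg_mul [Countable ι] (ha : Summable (‖a ·‖))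
    (hp : ∀ i, 1 ≤ p i) {s : ℂ} (hs : 0 < s.re) :
    1 / Complex.Gamma s * ∫ t in Set.Ioi (0 : ℝ),
        (t : ℂ) ^ (s - 1) * ∑' i, a i * Complex.exp (-(p i : ℂ) * t) =
      ∑' i, a i * (p i : ℂ) ^ (-s) := by
  have hp0 : ∀ i, 0 < p i := fun i => one_pos.trans_le (hp i)
  have hF : ∀ t ∈ Set.Ioi (0 : ℝ), HasSum (fun i => a i * (Real.exp (-p i * t) : ℂ))
      (∑' i, a i * Complex.exp (-(p i : ℂ) * t)) := fun t ht => by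
    push_cast
    exact (summable_norm_mul_cexp_neg_mul ha hp (le_of_lt ht)).of_norm.hasSum
  have hsum : Summable fun i => ‖a i‖ / p i ^ s.re :=
    ha.of_nonneg_of_le (fun i => by have := hp0 i; positivity)
      fun i => div_le_self (norm_nonneg _) (Real.one_le_rpow (hp i) hs.le)
  have hmellin := (hasSum_mellin (fun i => .inr (hp0 i)) hs hF hsum).tsum_eq
  simp only [mellin, smul_eq_mul, mul_div_assoc, tsum_mul_left] at hmellin
  rw [← hmellin, one_div, inv_mul_cancel_left₀ (Complex.Gamma_ne_zero_of_re_pos hs)]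
  simp only [div_eq_mul_inv, Complex.cpow_neg]

end ExponentialSeries

lemma summable_prod_pi_fin {α : Type*} {f : α → ℝ} (hf : Summable f) (hf0 : 0 ≤ f) (r : ℕ) :
    Summable fun n : Fin r → α => ∏ i, f (n i) := by
  induction r with
  | zero => exact .of_finite
  | succ r ih =>
    refine ((Fin.consEquiv fun _ => α).summable_iff).mp ?_
    simpa [Function.comp_def, Fin.consEquiv, Fin.prod_univ_succ] using
      hf.mul_of_nonneg ih hf0 fun _ => Finset.prod_nonneg fun i _ => hf0 _

lemma summable_pow_sum_pnat {q : ℝ} (hq0 : 0 ≤ q) (hq1 : q < 1) (r : ℕ) :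
    Summable fun n : Fin r → ℕ+ => q ^ ∑ i, (n i : ℕ) := by
  simpa only [Function.comp_apply, Finset.prod_pow_eq_pow_sum] using
    summable_prod_pi_fin ((summable_geometric_of_lt_one hq0 hq1).comp_injective
      PNat.coe_injective) (fun _ => pow_nonneg hq0 _) r

lemma one_le_qNum_natCast {q : ℝ} (hq0 : 0 ≤ q) (hq1 : q < 1) {m : ℕ} (hm : 1 ≤ m) :
    1 ≤ qNum q m := by
  rw [qNum, Real.rpow_natCast, le_div_iff₀ (by linarith), one_mul]
  linarith [pow_le_of_le_one hq0 hq1.le (by omega : m ≠ 0)]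

theorem multiple_q_L_mellin_general (q : ℝ) (hq0 : 0 < q) (hq1 : q < 1)
    (r f : ℕ) (hr : 1 ≤ r) (χ : DirichletCharacter ℂ f) (s : ℂ)
    (hs : 0 < s.re) :
    (∀ t : ℝ, 0 < t → Summable (fun n : Fin r → ℕ+ =>
      ‖χ (((∑ i, (n i : ℕ)) : ℕ) : ZMod f) * (q : ℂ) ^ (∑ i, (n i : ℕ)) *
        Complex.exp (-((qNum q ((∑ i, (n i : ℕ)) : ℝ) : ℝ) : ℂ) * (t : ℂ))‖)) ∧
    IntegrableOn (fun t : ℝ => (t : ℂ) ^ (s - 1) *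
      ∑' n : Fin r → ℕ+, χ (((∑ i, (n i : ℕ)) : ℕ) : ZMod f) * (q : ℂ) ^ (∑ i, (n i : ℕ)) *
        Complex.exp (-((qNum q ((∑ i, (n i : ℕ)) : ℝ) : ℝ) : ℂ) * (t : ℂ))) (Set.Ioi 0) ∧
    (1 / Complex.Gamma s) * (∫ t in Set.Ioi (0 : ℝ), (t : ℂ) ^ (s - 1) *
      ∑' n : Fin r → ℕ+, χ (((∑ i, (n i : ℕ)) : ℕ) : ZMod f) * (q : ℂ) ^ (∑ i, (n i : ℕ)) *
        Complex.exp (-((qNum q ((∑ i, (n i : ℕ)) : ℝ) : ℝ) : ℂ) * (t : ℂ))) =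
    ∑' n : Fin r → ℕ+, χ (((∑ i, (n i : ℕ)) : ℕ) : ZMod f) * (q : ℂ) ^ (∑ i, (n i : ℕ)) *
      ((qNum q ((∑ i, (n i : ℕ)) : ℝ) : ℝ) : ℂ) ^ (-s) := by
  have ha : Summable fun n : Fin r → ℕ+ =>
      ‖χ (((∑ i, (n i : ℕ)) : ℕ) : ZMod f) * (q : ℂ) ^ (∑ i, (n i : ℕ))‖ := by
    refine (summable_pow_sum_pnat hq0.le hq1 r).of_nonneg_of_le (fun _ => norm_nonneg _)
      fun n => ?_
    rw [norm_mul, norm_pow, Complex.norm_real, Real.norm_of_nonneg hq0.le]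
    exact mul_le_of_le_one_left (by positivity) (χ.norm_le_one _)
  have hp : ∀ n : Fin r → ℕ+, 1 ≤ qNum q ((∑ i, (n i : ℕ)) : ℝ) := fun n => by
    rw [← Nat.cast_sum]
    refine one_le_qNum_natCast hq0.le hq1 (hr.trans ?_)
    simpa using Finset.card_nsmul_le_sum Finset.univ (fun i => (n i : ℕ)) 1
      fun i _ => (n i).pos
  exact ⟨fun t ht => summable_norm_mul_cexp_neg_mul ha hp ht.le,
    integrableOn_cpow_mul_tsum_mul_cexp_neg_mul ha hp hs,
    one_div_Gamma_mul_mellin_tsum_mul_cexp_neg_mul ha hp hs⟩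

/-- For `0 < q < 1` and `Re s > 0`, the Mellin-type integral
`(1/Γ(s)) ∫₀^∞ t^{s-1} Σ_{n₁,…,n_r ≥ 1} χ(n₁+⋯+n_r) q^{n₁+⋯+n_r} e^{-[n₁+⋯+n_r]_q t} dt`
equals the multiple Dirichlet `q`-`L`-series `L_q^r(s,χ)`; moreover the inner series
converges absolutely (for every `t > 0`) and the integral converges absolutely. -/
theorem multiple_q_L_mellin (q : ℝ) (hq0 : 0 < q) (hq1 : q < 1)
    (r f : ℕ) (hr : 1 ≤ r) (hf : 1 ≤ f) (χ : DirichletCharacter ℂ f) (s : ℂ)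
    (hs : 0 < s.re) :
    (∀ t : ℝ, 0 < t → Summable (fun n : Fin r → ℕ+ =>
      ‖χ (((∑ i, (n i : ℕ)) : ℕ) : ZMod f) * (q : ℂ) ^ (∑ i, (n i : ℕ)) *
        Complex.exp (-((qNum q ((∑ i, (n i : ℕ)) : ℝ) : ℝ) : ℂ) * (t : ℂ))‖)) ∧
    IntegrableOn (fun t : ℝ => (t : ℂ) ^ (s - 1) *
      ∑' n : Fin r → ℕ+, χ (((∑ i, (n i : ℕ)) : ℕ) : ZMod f) * (q : ℂ) ^ (∑ i, (n i : ℕ)) *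
        Complex.exp (-((qNum q ((∑ i, (n i : ℕ)) : ℝ) : ℝ) : ℂ) * (t : ℂ))) (Set.Ioi 0) ∧
    (1 / Complex.Gamma s) * (∫ t in Set.Ioi (0 : ℝ), (t : ℂ) ^ (s - 1) *
      ∑' n : Fin r → ℕ+, χ (((∑ i, (n i : ℕ)) : ℕ) : ZMod f) * (q : ℂ) ^ (∑ i, (n i : ℕ)) *
        Complex.exp (-((qNum q ((∑ i, (n i : ℕ)) : ℝ) : ℝ) : ℂ) * (t : ℂ))) =
    ∑' n : Fin r → ℕ+, χ (((∑ i, (n i : ℕ)) : ℕ) : ZMod f) * (q : ℂ) ^ (∑ i, (n i : ℕ)) *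
      ((qNum q ((∑ i, (n i : ℕ)) : ℝ) : ℝ) : ℂ) ^ (-s) :=
  multiple_q_L_mellin_general q hq0 hq1 r f hr χ s hs
end

section
/- Let 0<q<1 be a real number, let r≥1 be an integer, let x>0 be a real number and let n≥0 be an integer. Then Σ_{n₁,...,n_r≥0} q^{x+n₁+⋯+n_r} [x+n₁+⋯+n_r]_q^{n} = (−1)^r · (n!/(n+r)!) · B^{(r)}_{n+r,q}(x), i.e. the multiple q-Hurwitz zeta series ζ_{r,q}(s,x) evaluated at s = −n equals (−1)^r n!/(n+r)! times the multiple q-Bernoulli polynomial B^{(r)}_{n+r,q}(x). -/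
/-- The generating function `G_{r,q,x}(t) = (-t)^r Σ_{n₁,…,n_r ≥ 0} q^{x+n₁+⋯+n_r}
e^{[x+n₁+⋯+n_r]_q t}` of the multiple `q`-Bernoulli polynomials. -/
noncomputable def multipleQBernoulliGen (q : ℝ) (r : ℕ) (x : ℝ) (t : ℂ) : ℂ :=
  (-t) ^ r * ∑' n : Fin r → ℕ,
    ((q ^ (x + ((∑ i, n i : ℕ) : ℝ)) : ℝ) : ℂ) *
      Complex.exp (((qNum q (x + ((∑ i, n i : ℕ) : ℝ)) : ℝ) : ℂ) * t)

/-- The multiple `q`-Bernoulli polynomial `B^{(r)}_{m,q}(x)`, the `m`-th derivative of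
`G_{r,q,x}` at `t = 0`. -/
noncomputable def multipleQBernoulli (q : ℝ) (r m : ℕ) (x : ℝ) : ℂ :=
  iteratedDeriv m (multipleQBernoulliGen q r x) 0

/-!
Expanding every exponential in `G_{r,q,x}` and interchanging the two summations gives
`G_{r,q,x}(t) = (-t)^r Σ_k ζ_{r,q}(-k, x) t^k / k!` for every `t`. The interchange is legitimate
because the weights `q^{x+n₁+⋯+n_r}` are summable and the `q`-numbers `[x+n₁+⋯+n_r]_q` are
bounded (by `(1 + q^x)/(1 - q)`). So `G_{r,q,x}` is entire with this Taylor series at `0`, and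
the claim is its coefficient of `t^{n+r}`.
-/

open scoped Nat

open FormalMultilinearSeries in
theorem iteratedDeriv_zero_eq_factorial_mul_of_forall_hasSum {𝕜 : Type*} [RCLike 𝕜]
    {f : 𝕜 → 𝕜} {a : ℕ → 𝕜} (h : ∀ t, HasSum (fun k ↦ a k * t ^ k) (f t)) (k : ℕ) :
    iteratedDeriv k f 0 = k ! * a k := by
  have hradius : (ofScalars 𝕜 a).radius = ⊤ := by
    refine ENNReal.eq_top_of_forall_nnreal_le fun ρ ↦ (ofScalars 𝕜 a).le_radius_of_tendsto
      (l := 0) ?_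
    simpa [ofScalars_norm, norm_mul, norm_pow] using
      (h ((ρ : ℝ) : 𝕜)).summable.tendsto_atTop_zero.norm
  have hf : HasFPowerSeriesOnBall f (ofScalars 𝕜 a) 0 ⊤ :=
    ⟨hradius.ge, ENNReal.zero_lt_top, fun {y} _ ↦ by
      simpa [ofScalars_apply_eq, smul_eq_mul, mul_comm] using h y⟩
  simpa [ofScalars_apply_eq, iteratedDeriv_eq_iteratedFDeriv] using (hf.factorial_smul 1 k).symm

theorem hasSum_pow_mul_of_hasSum {R : Type*} [CommSemiring R] [TopologicalSpace R]
    [IsTopologicalSemiring R] {a : ℕ → R} {s t : R} (r : ℕ)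
    (h : HasSum (fun k ↦ a k * t ^ k) s) :
    HasSum (fun k ↦ (if r ≤ k then a (k - r) else 0) * t ^ k) (t ^ r * s) := by
  refine ((add_left_injective r).hasSum_iff fun k hk ↦ ?_).mp ?_
  · rw [if_neg fun hrk ↦ hk ⟨k - r, Nat.sub_add_cancel hrk⟩, zero_mul]
  · refine (h.mul_left (t ^ r)).congr_fun fun k ↦ ?_
    simp only [Function.comp_apply, le_add_iff_nonneg_left, zero_le, ↓reduceIte,
      Nat.add_sub_cancel, pow_add]
    ring

section ExponentialSums

variable {ι : Type*} {A c : ι → ℂ} {K : ℝ}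

theorem hasSum_tsum_mul_exp (hA : Summable (fun i ↦ ‖A i‖)) (hc : ∀ i, ‖c i‖ ≤ K) (t : ℂ) :
    HasSum (fun k ↦ (∑' i, A i * c i ^ k) / k ! * t ^ k) (∑' i, A i * Complex.exp (c i * t)) := by
  set F : ι × ℕ → ℂ := fun p ↦ A p.1 * ((c p.1 * t) ^ p.2 / p.2 !)
  have hF : Summable F := by
    refine .of_norm_bounded (hA.mul_of_nonneg (Real.summable_pow_div_factorial (|K| * ‖t‖))
      (fun _ ↦ norm_nonneg _) fun _ ↦ by positivity) fun p ↦ ?_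
    simp only [F, norm_mul, norm_div, norm_pow, Complex.norm_natCast]
    gcongr
    exact (hc p.1).trans (le_abs_self K)
  have hexp (i : ι) : HasSum (fun k ↦ F (i, k)) (A i * Complex.exp (c i * t)) := by
    rw [Complex.exp_eq_exp_ℂ]
    exact (NormedSpace.expSeries_div_hasSum_exp (c i * t)).mul_left (A i)
  have hcoef (k : ℕ) : HasSum (fun i ↦ F (i, k)) ((∑' i, A i * c i ^ k) / k ! * t ^ k) := by
    have hF' (i : ι) : F (i, k) = A i * c i ^ k * (t ^ k / k !) := by
      simp only [F]; ring
    have hk := (hF.comp_injective (Prod.mk_left_injective k)).hasSum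
    simp only [Function.comp_def, hF', tsum_mul_right] at hk
    rw [div_mul_comm, mul_comm]
    exact hk.congr_fun hF'
  rw [(hF.hasSum.prod_fiberwise hexp).tsum_eq]
  exact ((Equiv.prodComm ℕ ι).hasSum_iff.mpr hF.hasSum).prod_fiberwise hcoef

theorem iteratedDeriv_add_neg_pow_mul_tsum_mul_exp (hA : Summable (fun i ↦ ‖A i‖))
    (hc : ∀ i, ‖c i‖ ≤ K) (n r : ℕ) :
    iteratedDeriv (n + r) (fun t ↦ (-t) ^ r * ∑' i, A i * Complex.exp (c i * t)) 0 =
      (-1) ^ r * ((n + r)! / n !) * ∑' i, A i * c i ^ n := by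
  have hseries (t : ℂ) : HasSum
      (fun k ↦ (if r ≤ k then (-1) ^ r * ((∑' i, A i * c i ^ (k - r)) / (k - r)!) else 0) * t ^ k)
      ((-t) ^ r * ∑' i, A i * Complex.exp (c i * t)) := by
    rw [neg_pow t, mul_comm ((-1) ^ r), mul_assoc]
    refine hasSum_pow_mul_of_hasSum (a := fun k ↦ (-1) ^ r * ((∑' i, A i * c i ^ k) / k !)) r ?_
    simpa only [mul_assoc] using (hasSum_tsum_mul_exp hA hc t).mul_left ((-1) ^ r)
  rw [iteratedDeriv_zero_eq_factorial_mul_of_forall_hasSum hseries, if_pos (Nat.le_add_left r n),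
    Nat.add_sub_cancel]
  ring

end ExponentialSums

theorem summable_pow_sum_fin {q : ℝ} (hq0 : 0 ≤ q) (hq1 : q < 1) (r : ℕ) :
    Summable (fun m : Fin r → ℕ ↦ q ^ ∑ i, m i) := by
  induction r with
  | zero => exact .of_finite
  | succ r ih =>
    rw [← (Fin.consEquiv fun _ ↦ ℕ).summable_iff]
    have hcons : (fun m : Fin (r + 1) → ℕ ↦ q ^ ∑ i, m i) ∘ Fin.consEquiv (fun _ ↦ ℕ) =
        fun p : ℕ × (Fin r → ℕ) ↦ q ^ p.1 * q ^ ∑ i, p.2 i := by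
      funext p
      show q ^ ∑ i, Fin.cons p.1 p.2 i = _
      rw [Fin.sum_cons, pow_add]
    rw [hcons]
    exact (summable_geometric_of_lt_one hq0 hq1).mul_of_nonneg
      (g := fun m : Fin r → ℕ ↦ q ^ ∑ i, m i) ih (fun _ ↦ by positivity) fun _ ↦ by positivity

theorem summable_norm_rpow_add_sum_fin {q : ℝ} (hq0 : 0 < q) (hq1 : q < 1) (x : ℝ) (r : ℕ) :
    Summable (fun m : Fin r → ℕ ↦ ‖((q ^ (x + ((∑ i, m i : ℕ) : ℝ)) : ℝ) : ℂ)‖) := by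
  refine ((summable_pow_sum_fin hq0.le hq1 r).mul_left (q ^ x)).congr fun m ↦ ?_
  rw [Complex.norm_real, Real.norm_eq_abs, abs_of_pos (Real.rpow_pos_of_pos hq0 _),
    Real.rpow_add hq0, Real.rpow_natCast]

theorem abs_qNum_le {q x y : ℝ} (hq0 : 0 < q) (hq1 : q < 1) (hxy : x ≤ y) :
    |qNum q y| ≤ (1 + q ^ x) / (1 - q) := by
  have hqy : 0 < q ^ y := Real.rpow_pos_of_pos hq0 y
  have hqxy : q ^ y ≤ q ^ x := Real.rpow_le_rpow_of_exponent_ge hq0 hq1.le hxy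
  rw [qNum, abs_div, abs_of_pos (sub_pos.2 hq1)]
  gcongr
  rw [abs_le]
  constructor <;> linarith

theorem multiple_q_hurwitz_zeta_neg_int_general (q : ℝ) (hq0 : 0 < q) (hq1 : q < 1)
    (r : ℕ) (x : ℝ) (n : ℕ) :
    (∑' m : Fin r → ℕ,
      ((q ^ (x + ((∑ i, m i : ℕ) : ℝ)) : ℝ) : ℂ) *
        ((qNum q (x + ((∑ i, m i : ℕ) : ℝ)) : ℝ) : ℂ) ^ n) =
    (-1 : ℂ) ^ r * ((n.factorial : ℂ) / ((n + r).factorial : ℂ)) *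
      multipleQBernoulli q r (n + r) x := by
  have hqNum (m : Fin r → ℕ) :
      ‖((qNum q (x + ((∑ i, m i : ℕ) : ℝ)) : ℝ) : ℂ)‖ ≤ (1 + q ^ x) / (1 - q) := by
    rw [Complex.norm_real, Real.norm_eq_abs]
    exact abs_qNum_le hq0 hq1 (le_add_of_nonneg_right (Nat.cast_nonneg _))
  have hB : multipleQBernoulli q r (n + r) x = (-1) ^ r * ((n + r)! / n !) * ∑' m : Fin r → ℕ,
      ((q ^ (x + ((∑ i, m i : ℕ) : ℝ)) : ℝ) : ℂ) *
        ((qNum q (x + ((∑ i, m i : ℕ) : ℝ)) : ℝ) : ℂ) ^ n := by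
    unfold multipleQBernoulli multipleQBernoulliGen
    exact iteratedDeriv_add_neg_pow_mul_tsum_mul_exp
      (summable_norm_rpow_add_sum_fin hq0 hq1 x r) hqNum n r
  have hfac : (n ! : ℂ) / (n + r)! * ((n + r)! / n !) = 1 := by
    rw [div_mul_div_cancel₀ (mod_cast (n + r).factorial_ne_zero),
      div_self (mod_cast n.factorial_ne_zero)]
  rw [hB, ← mul_assoc, mul_mul_mul_comm, ← mul_pow, neg_one_mul, neg_neg, one_pow, hfac,
    one_mul, one_mul]

/-- For `0 < q < 1`, `r ≥ 1`, real `x > 0` and `n ≥ 0`, the multiple `q`-Hurwitz zeta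
series at `s = -n` equals `(-1)^r n!/(n+r)! B^{(r)}_{n+r,q}(x)`. -/
theorem multiple_q_hurwitz_zeta_neg_int (q : ℝ) (hq0 : 0 < q) (hq1 : q < 1)
    (r : ℕ) (hr : 1 ≤ r) (x : ℝ) (hx : 0 < x) (n : ℕ) :
    (∑' m : Fin r → ℕ,
      ((q ^ (x + ((∑ i, m i : ℕ) : ℝ)) : ℝ) : ℂ) *
        ((qNum q (x + ((∑ i, m i : ℕ) : ℝ)) : ℝ) : ℂ) ^ n) =
    (-1 : ℂ) ^ r * ((n.factorial : ℂ) / ((n + r).factorial : ℂ)) *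
      multipleQBernoulli q r (n + r) x :=
  multiple_q_hurwitz_zeta_neg_int_general q hq0 hq1 r x n
end

section
/- Let 0<q<1 be a real number, let r≥1 and F≥1 be integers, let a₁,...,a_r be integers with 0 < a_i ≤ F, and let n≥0 be an integer. Then H_{r,q}(−n; a₁,...,a_r | F) = [F]_q^{n} · (−1)^r · (n!/(n+r)!) · B^{(r)}_{n+r,q^F}((a₁+⋯+a_r)/F). -/
/-! Writing `mᵢ = aᵢ + F νᵢ` identifies the congruence class with `ℕ^r`. With `Q = q^F`,
`x = (a₁ + ⋯ + a_r)/F` and `|ν| = ν₁ + ⋯ + ν_r` one has `q^{Σ mᵢ} = Q^{x+|ν|}` and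
`[Σ mᵢ]_q = [F]_q [x+|ν|]_Q`, so the zeta value is `[F]_q^n Σ_ν Q^{x+|ν|} [x+|ν|]_Q^n`.
On the other side `G_{r,Q,x}(t) = (-1)^r t^r S(t)` with `S(t) = Σ_ν Q^{x+|ν|} e^{[x+|ν|]_Q t}`.
The frequencies `[x+|ν|]_Q` are bounded by `1/(1-Q)`, so `S` may be differentiated termwise
and `S⁽ⁿ⁾(0) = Σ_ν Q^{x+|ν|} [x+|ν|]_Q^n`, while Leibniz' rule gives
`(t^r S)⁽ⁿ⁺ʳ⁾(0) = (n+r)!/n! · S⁽ⁿ⁾(0)`. -/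

open Complex
open scoped ContDiff Nat

theorem iteratedDeriv_pow_mul_zero {𝕜 : Type*} [NontriviallyNormedField 𝕜] {f : 𝕜 → 𝕜}
    (n r : ℕ) (hf : ContDiffAt 𝕜 (n + r) f 0) :
    iteratedDeriv (n + r) (fun t => t ^ r * f t) 0 =
      (n + r).choose r * r ! * iteratedDeriv n f 0 := by
  rw [iteratedDeriv_fun_mul (by fun_prop) hf, Finset.sum_eq_single r]
  · rw [iteratedDeriv_fun_pow_zero, if_pos rfl, Nat.add_sub_cancel]
  · intro i _ hi
    rw [iteratedDeriv_fun_pow_zero, if_neg hi]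
    simp
  · simp

theorem summable_fin_prod_of_nonneg {f : ℕ → ℝ} (hf0 : 0 ≤ f) (hf : Summable f) (r : ℕ) :
    Summable fun ν : Fin r → ℕ => ∏ i, f (ν i) := by
  induction r with
  | zero => exact Summable.of_finite
  | succ r ih =>
    rw [← (Fin.consEquiv fun _ => ℕ).summable_iff]
    simpa [Function.comp_def, Fin.consEquiv, Fin.prod_univ_succ] using
      hf.mul_of_nonneg ih (fun k => hf0 k) fun ν => Finset.prod_nonneg fun i _ => hf0 (ν i)

section WeightedExpSum

variable {ι : Type*} {c lam : ι → ℂ} {M : ℝ}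

noncomputable def weightedExpSum (c lam : ι → ℂ) (k : ℕ) (t : ℂ) : ℂ :=
  ∑' ν, c ν * lam ν ^ k * exp (lam ν * t)

theorem norm_weightedExpSum_term_le (hlam : ∀ ν, ‖lam ν‖ ≤ M) (ν : ι) (k : ℕ) {t : ℂ} {R : ℝ}
    (ht : ‖t‖ ≤ R) :
    ‖c ν * lam ν ^ k * exp (lam ν * t)‖ ≤ ‖c ν‖ * (M ^ k * Real.exp (M * R)) := by
  have hM : 0 ≤ M := (norm_nonneg _).trans (hlam ν)
  rw [norm_mul, norm_mul, norm_pow, mul_assoc]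
  gcongr
  · exact hlam ν
  · refine (norm_exp_le_exp_norm _).trans (Real.exp_le_exp.2 ?_)
    rw [norm_mul]
    exact mul_le_mul (hlam ν) ht (norm_nonneg _) hM

theorem hasDerivAt_weightedExpSum (hc : Summable fun ν => ‖c ν‖) (hlam : ∀ ν, ‖lam ν‖ ≤ M)
    (k : ℕ) (t : ℂ) :
    HasDerivAt (weightedExpSum c lam k) (weightedExpSum c lam (k + 1) t) t := by
  have ht : t ∈ Metric.ball (0 : ℂ) (‖t‖ + 1) := by simp
  refine hasDerivAt_tsum_of_isPreconnected
    (hc.mul_right (M ^ (k + 1) * Real.exp (M * (‖t‖ + 1)))) Metric.isOpen_ball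
    (convex_ball _ _).isPreconnected (fun ν y _ => ?_)
    (fun ν y hy => norm_weightedExpSum_term_le hlam ν (k + 1) (t := y) (mem_ball_zero_iff.1 hy).le)
    ht ?_ ht
  · exact (((hasDerivAt_id y).const_mul (lam ν)).cexp.const_mul (c ν * lam ν ^ k)).congr_deriv
      (by simp only [id]; ring)
  · exact .of_norm_bounded (hc.mul_right _) fun ν => norm_weightedExpSum_term_le hlam ν k le_rfl

theorem iteratedDeriv_weightedExpSum (hc : Summable fun ν => ‖c ν‖) (hlam : ∀ ν, ‖lam ν‖ ≤ M)
    (m k : ℕ) : iteratedDeriv m (weightedExpSum c lam k) = weightedExpSum c lam (k + m) := by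
  induction m generalizing k with
  | zero => simp
  | succ m ih =>
    rw [iteratedDeriv_succ', funext fun t => (hasDerivAt_weightedExpSum hc hlam k t).deriv, ih,
      add_right_comm, add_assoc]

theorem contDiff_weightedExpSum (hc : Summable fun ν => ‖c ν‖) (hlam : ∀ ν, ‖lam ν‖ ≤ M)
    (k : ℕ) : ContDiff ℂ ∞ (weightedExpSum c lam k) :=
  Differentiable.contDiff fun t => (hasDerivAt_weightedExpSum hc hlam k t).differentiableAt

theorem weightedExpSum_zero (c lam : ι → ℂ) (k : ℕ) :
    weightedExpSum c lam k 0 = ∑' ν, c ν * lam ν ^ k := by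
  simp [weightedExpSum]

end WeightedExpSum

theorem qNum_natCast_mul {q : ℝ} (hq : 0 ≤ q) {F : ℕ} (hqF : q ^ F ≠ 1) (y : ℝ) :
    qNum q (F * y) = qNum q F * qNum (q ^ F) y := by
  have hq1 : 1 - q ≠ 0 := by
    rintro h
    exact hqF (by rw [show q = 1 by linarith, one_pow])
  have hqF1 : 1 - q ^ F ≠ 0 := sub_ne_zero.2 (Ne.symm hqF)
  simp only [qNum, Real.rpow_mul hq, Real.rpow_natCast]
  field_simp

theorem abs_qNum_le_s7 {Q y : ℝ} (hQ0 : 0 < Q) (hQ1 : Q < 1) (hy : 0 ≤ y) :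
    |qNum Q y| ≤ (1 - Q)⁻¹ := by
  have hQy0 : 0 < Q ^ y := Real.rpow_pos_of_pos hQ0 y
  have hQy1 : Q ^ y ≤ 1 := Real.rpow_le_one hQ0.le hQ1.le hy
  rw [qNum, abs_of_nonneg (div_nonneg (by linarith) (by linarith)), div_eq_mul_inv]
  exact mul_le_of_le_one_left (inv_nonneg.2 (by linarith)) (by linarith)

theorem Nat.ModEq.le_of_pos_of_le {m a F : ℕ} (h : m ≡ a [MOD F]) (hm : 0 < m) (ha : a ≤ F) :
    a ≤ m := by
  by_contra! hma
  have hmF : m % F = m := Nat.mod_eq_of_lt (hma.trans_le ha)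
  rcases ha.lt_or_eq with haF | rfl
  · have := Nat.mod_eq_of_lt haF
    unfold Nat.ModEq at h
    omega
  · rw [Nat.ModEq, Nat.mod_self] at h
    omega

def equivPNatModEq {F a : ℕ} (ha : 1 ≤ a ∧ a ≤ F) : ℕ ≃ {m : ℕ+ // (m : ℕ) ≡ a [MOD F]} where
  toFun k := ⟨⟨a + F * k, by omega⟩, Nat.add_mul_mod_self_left a F k⟩
  invFun m := ((m : ℕ) - a) / F
  left_inv k := by simp [Nat.mul_div_cancel_left k (by omega : 0 < F)]
  right_inv := by
    rintro ⟨m, hm⟩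
    have hle := hm.le_of_pos_of_le m.pos ha.2
    have hdvd : F ∣ (m : ℕ) - a := (Nat.modEq_iff_dvd' hle).1 hm.symm
    apply Subtype.ext
    apply PNat.coe_injective
    simp only [PNat.mk_coe, Nat.mul_div_cancel' hdvd]
    omega

def piEquivPNatModEq {ι : Type*} {F : ℕ} (a : ι → ℕ) (ha : ∀ i, 1 ≤ a i ∧ a i ≤ F) :
    (ι → ℕ) ≃ {m : ι → ℕ+ // ∀ i, (m i : ℕ) ≡ a i [MOD F]} :=
  (Equiv.piCongrRight fun i => equivPNatModEq (ha i)).trans Equiv.subtypePiEquivPi.symm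

theorem sum_coe_piEquivPNatModEq {ι : Type*} [Fintype ι] {F : ℕ} (a : ι → ℕ)
    (ha : ∀ i, 1 ≤ a i ∧ a i ≤ F) (ν : ι → ℕ) :
    ∑ i, ((piEquivPNatModEq a ha ν : ι → ℕ+) i : ℕ) = ∑ i, a i + F * ∑ i, ν i := by
  change ∑ i, (a i + F * ν i) = _
  rw [Finset.sum_add_distrib, Finset.mul_sum]

theorem tsum_eq_multipleQBernoulli {Q : ℝ} (hQ0 : 0 < Q) (hQ1 : Q < 1) (r n : ℕ) {x : ℝ}
    (hx : 0 ≤ x) :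
    ∑' ν : Fin r → ℕ, ((Q ^ (x + ((∑ i, ν i : ℕ) : ℝ)) : ℝ) : ℂ) *
        ((qNum Q (x + ((∑ i, ν i : ℕ) : ℝ)) : ℝ) : ℂ) ^ n =
      (-1) ^ r * (n ! / (n + r)! : ℂ) * multipleQBernoulli Q r (n + r) x := by
  set c : (Fin r → ℕ) → ℂ := fun ν => ((Q ^ (x + ((∑ i, ν i : ℕ) : ℝ)) : ℝ) : ℂ)
  set lam : (Fin r → ℕ) → ℂ := fun ν => ((qNum Q (x + ((∑ i, ν i : ℕ) : ℝ)) : ℝ) : ℂ)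
  have hc : Summable fun ν => ‖c ν‖ := by
    refine ((summable_fin_prod_of_nonneg (fun k => pow_nonneg hQ0.le k)
      (summable_geometric_of_lt_one hQ0.le hQ1) r).mul_left (Q ^ x)).congr fun ν => ?_
    rw [Complex.norm_real, Real.norm_of_nonneg (Real.rpow_nonneg hQ0.le _), Real.rpow_add hQ0,
      Real.rpow_natCast, Finset.prod_pow_eq_pow_sum]
  have hlam : ∀ ν, ‖lam ν‖ ≤ (1 - Q)⁻¹ := fun ν => by
    simpa [lam] using abs_qNum_le_s7 hQ0 hQ1 (by positivity : 0 ≤ x + ((∑ i, ν i : ℕ) : ℝ))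
  have hgen : multipleQBernoulliGen Q r x =
      fun t => (-1) ^ r * (t ^ r * weightedExpSum c lam 0 t) := by
    funext t
    rw [multipleQBernoulliGen, neg_pow, mul_assoc]
    simp only [weightedExpSum, c, lam, pow_zero, mul_one]
  have hsmooth : ContDiffAt ℂ (n + r) (weightedExpSum c lam 0) 0 := by
    exact_mod_cast (contDiff_infty.1 (contDiff_weightedExpSum hc hlam 0) (n + r)).contDiffAt
  have hB : multipleQBernoulli Q r (n + r) x =
      (-1) ^ r * ((n + r).choose r * r ! : ℂ) * ∑' ν, c ν * lam ν ^ n := by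
    rw [multipleQBernoulli, hgen, iteratedDeriv_const_mul_field,
      iteratedDeriv_pow_mul_zero n r hsmooth, iteratedDeriv_weightedExpSum hc hlam, zero_add,
      weightedExpSum_zero]
    ring
  have hcoef :
      (-1 : ℂ) ^ r * (n ! / (n + r)! : ℂ) * ((-1) ^ r * ((n + r).choose r * r ! : ℂ)) = 1 := by
    rw [mul_mul_mul_comm, ← mul_pow, neg_one_mul, neg_neg, one_pow, one_mul, div_mul_eq_mul_div,
      div_eq_one_iff_eq (by exact_mod_cast (n + r).factorial_ne_zero),
      ← Nat.add_choose_mul_factorial_mul_factorial n r]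
    push_cast
    ring
  rw [hB]
  linear_combination (-∑' ν, c ν * lam ν ^ n) * hcoef

theorem partial_multiple_q_zeta_neg_int_general (q : ℝ) (hq0 : 0 < q) (hq1 : q < 1)
    (r F : ℕ) (hF : 1 ≤ F) (a : Fin r → ℕ)
    (ha : ∀ i, 1 ≤ a i ∧ a i ≤ F) (n : ℕ) :
    (∑' m : {m : Fin r → ℕ+ // ∀ i, (m i : ℕ) ≡ a i [MOD F]},
      (q : ℂ) ^ (∑ i, ((m : Fin r → ℕ+) i : ℕ)) *
        ((qNum q ((∑ i, ((m : Fin r → ℕ+) i : ℕ)) : ℝ) : ℝ) : ℂ) ^ n) =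
    ((qNum q (F : ℝ) : ℝ) : ℂ) ^ n * (-1 : ℂ) ^ r *
      ((n.factorial : ℂ) / ((n + r).factorial : ℂ)) *
        multipleQBernoulli (q ^ F) r (n + r) (((∑ i, a i : ℕ) : ℝ) / (F : ℝ)) := by
  set x : ℝ := ((∑ i, a i : ℕ) : ℝ) / F
  have hQ1 : q ^ F < 1 := pow_lt_one₀ hq0.le hq1 (by omega)
  have hcast : ∀ N : ℕ, ((∑ i, a i + F * N : ℕ) : ℝ) = F * (x + N) := fun N => by
    have : (F : ℝ) ≠ 0 := by positivity
    rw [Nat.cast_add, Nat.cast_mul, mul_add, mul_div_cancel₀ _ this]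
  have hterm : ∀ ν : Fin r → ℕ,
      (q : ℂ) ^ (∑ i, ((piEquivPNatModEq a ha ν : Fin r → ℕ+) i : ℕ)) *
        ((qNum q ((∑ i, ((piEquivPNatModEq a ha ν : Fin r → ℕ+) i : ℕ)) : ℝ) : ℝ) : ℂ) ^ n =
      ((qNum q F : ℝ) : ℂ) ^ n * ((((q ^ F) ^ (x + ((∑ i, ν i : ℕ) : ℝ)) : ℝ) : ℂ) *
        ((qNum (q ^ F) (x + ((∑ i, ν i : ℕ) : ℝ)) : ℝ) : ℂ) ^ n) := fun ν => by
    rw [← Nat.cast_sum, sum_coe_piEquivPNatModEq, ← Complex.ofReal_pow, ← Real.rpow_natCast,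
      hcast, qNum_natCast_mul hq0.le hQ1.ne, Real.rpow_mul hq0.le, Real.rpow_natCast]
    push_cast
    ring
  rw [← (piEquivPNatModEq a ha).tsum_eq, tsum_congr hterm, tsum_mul_left,
    tsum_eq_multipleQBernoulli (pow_pos hq0 F) hQ1 r n (by positivity)]
  ring

/-- For `0 < q < 1`, integers `r, F ≥ 1`, integers `0 < aᵢ ≤ F` and `n ≥ 0`, the partial
multiple `q`-zeta function at `s = -n` satisfies
`H_{r,q}(-n; a₁,…,a_r | F) = [F]_q^n (-1)^r n!/(n+r)! B^{(r)}_{n+r,q^F}((a₁+⋯+a_r)/F)`. -/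
theorem partial_multiple_q_zeta_neg_int (q : ℝ) (hq0 : 0 < q) (hq1 : q < 1)
    (r F : ℕ) (hr : 1 ≤ r) (hF : 1 ≤ F) (a : Fin r → ℕ)
    (ha : ∀ i, 1 ≤ a i ∧ a i ≤ F) (n : ℕ) :
    (∑' m : {m : Fin r → ℕ+ // ∀ i, (m i : ℕ) ≡ a i [MOD F]},
      (q : ℂ) ^ (∑ i, ((m : Fin r → ℕ+) i : ℕ)) *
        ((qNum q ((∑ i, ((m : Fin r → ℕ+) i : ℕ)) : ℝ) : ℝ) : ℂ) ^ n) =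
    ((qNum q (F : ℝ) : ℝ) : ℂ) ^ n * (-1 : ℂ) ^ r *
      ((n.factorial : ℂ) / ((n + r).factorial : ℂ)) *
        multipleQBernoulli (q ^ F) r (n + r) (((∑ i, a i : ℕ) : ℝ) / (F : ℝ)) :=
  partial_multiple_q_zeta_neg_int_general q hq0 hq1 r F hF a ha n
end

section
/- Let 0<q<1 be a real number, let x>0 be a real number and let n≥0 be an integer. Then β_{n,q}(x) = Σ_{i=0}^{n} C(n,i) · q^{xi} · β_{i,q} · [x]_q^{n−i}, where β_{i,q} = β_{i,q}(0) and C(n,i) is the binomial coefficient. -/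
/-- The generating function `F_q(t,x) = ((q-1)/log q) e^{t/(1-q)} -
t Σ_{m ≥ 0} q^{m+x} e^{[m+x]_q t}` of the `q`-Bernoulli polynomials `β_{n,q}(x)`. -/
noncomputable def qBernoulliPolyGen (q x : ℝ) (t : ℂ) : ℂ :=
  (((q - 1) / Real.log q : ℝ) : ℂ) * Complex.exp (t / (1 - (q : ℂ))) -
    t * ∑' m : ℕ, ((q ^ ((m : ℝ) + x) : ℝ) : ℂ) *
      Complex.exp (((qNum q ((m : ℝ) + x) : ℝ) : ℂ) * t)

/-- The `q`-Bernoulli polynomial `β_{n,q}(x)`, the `n`-th derivative of `F_q(·,x)` at `0`. -/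
noncomputable def qBernoulliPoly (q : ℝ) (n : ℕ) (x : ℝ) : ℂ :=
  iteratedDeriv n (qBernoulliPolyGen q x) 0

lemma qNum_add {q : ℝ} (hq0 : 0 < q) (hq1 : q ≠ 1) (x y : ℝ) :
    qNum q (x + y) = qNum q x + q ^ x * qNum q y := by
  have : 1 - q ≠ 0 := sub_ne_zero.2 hq1.symm
  rw [qNum, qNum, qNum, Real.rpow_add hq0]
  field_simp
  ring

lemma abs_qNum_le_s12 {q x : ℝ} (hq0 : 0 < q) (hq1 : q < 1) (hx : 0 ≤ x) :
    |qNum q x| ≤ (1 - q)⁻¹ := by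
  have h1q : 0 < 1 - q := by linarith
  have hqx : 0 < q ^ x := Real.rpow_pos_of_pos hq0 x
  have hqx1 : q ^ x ≤ 1 := Real.rpow_le_one hq0.le hq1.le hx
  rw [qNum, abs_div, abs_of_pos h1q, abs_of_nonneg (by linarith), div_le_iff₀ h1q,
    inv_mul_cancel₀ h1q.ne']
  linarith

lemma qBernoulliPolyGen_eq_mul_exp {q : ℝ} (hq0 : 0 < q) (hq1 : q ≠ 1) (x : ℝ) (t : ℂ) :
    qBernoulliPolyGen q x t =
      qBernoulliPolyGen q 0 (((q ^ x : ℝ) : ℂ) * t) * Complex.exp (((qNum q x : ℝ) : ℂ) * t) := by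
  have h1q : (1 : ℂ) - q ≠ 0 := by exact_mod_cast sub_ne_zero.2 hq1.symm
  have hexp : ((q ^ x : ℝ) : ℂ) * t / (1 - q) + ((qNum q x : ℝ) : ℂ) * t = t / (1 - q) := by
    rw [qNum]
    push_cast
    field_simp
    ring
  have hterm (m : ℕ) :
      ((q ^ ((m : ℝ) + x) : ℝ) : ℂ) * Complex.exp (((qNum q ((m : ℝ) + x) : ℝ) : ℂ) * t) =
        ((q ^ x : ℝ) : ℂ) * Complex.exp (((qNum q x : ℝ) : ℂ) * t) *
          (((q ^ (m : ℝ) : ℝ) : ℂ) *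
            Complex.exp (((qNum q m : ℝ) : ℂ) * (((q ^ x : ℝ) : ℂ) * t))) := by
    rw [add_comm (m : ℝ), qNum_add hq0 hq1, Real.rpow_add hq0]
    push_cast
    rw [add_mul, Complex.exp_add, mul_comm ((q ^ x : ℝ) : ℂ) ((qNum q m : ℝ) : ℂ),
      mul_assoc ((qNum q m : ℝ) : ℂ)]
    ring
  simp only [qBernoulliPolyGen, add_zero]
  rw [tsum_congr hterm, tsum_mul_left, ← hexp, Complex.exp_add]
  ring

lemma differentiable_qBernoulliPolyGen {q x : ℝ} (hq0 : 0 < q) (hq1 : q < 1) (hx : 0 ≤ x) :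
    Differentiable ℂ (qBernoulliPolyGen q x) := by
  set F : ℕ → ℂ → ℂ := fun m t =>
    ((q ^ ((m : ℝ) + x) : ℝ) : ℂ) * Complex.exp (((qNum q ((m : ℝ) + x) : ℝ) : ℂ) * t)
  have hF_le (R : ℝ) (m : ℕ) (t : ℂ) (ht : t ∈ Metric.ball 0 R) :
      ‖F m t‖ ≤ q ^ m * Real.exp (R / (1 - q)) := by
    have hqm : q ^ ((m : ℝ) + x) ≤ q ^ m := by
      rw [← Real.rpow_natCast]
      exact Real.rpow_le_rpow_of_exponent_ge hq0 hq1.le (by linarith)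
    have hR : ‖t‖ < R := by simpa using ht
    have h1q : 0 < 1 - q := by linarith
    have hexp : ‖((qNum q ((m : ℝ) + x) : ℝ) : ℂ) * t‖ ≤ R / (1 - q) := by
      rw [norm_mul, Complex.norm_real, Real.norm_eq_abs, div_eq_inv_mul]
      exact mul_le_mul (abs_qNum_le_s12 hq0 hq1 (by positivity)) hR.le (norm_nonneg t)
        (inv_nonneg.2 h1q.le)
    rw [norm_mul, Complex.norm_real, Real.norm_of_nonneg (by positivity)]
    exact mul_le_mul hqm ((Complex.norm_exp_le_exp_norm _).trans (Real.exp_le_exp.2 hexp))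
      (norm_nonneg _) (by positivity)
  have hseries : Differentiable ℂ fun t => ∑' m, F m t := by
    intro z
    have hz : Metric.ball (0 : ℂ) (‖z‖ + 1) ∈ nhds z :=
      Metric.isOpen_ball.mem_nhds (by simp)
    refine (Complex.differentiableOn_tsum_of_summable_norm
      ((summable_geometric_of_lt_one hq0.le hq1).mul_right _) (fun m => ?_)
      Metric.isOpen_ball (hF_le _)).differentiableAt hz
    exact (Differentiable.const_mul (by fun_prop) _).differentiableOn
  unfold qBernoulliPolyGen
  fun_prop

theorem qBernoulliPoly_addition_general (q : ℝ) (hq0 : 0 < q) (hq1 : q < 1)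
    (x : ℝ) (n : ℕ) :
    qBernoulliPoly q n x =
    ∑ i ∈ Finset.range (n + 1),
      (n.choose i : ℂ) * ((q ^ (x * (i : ℝ)) : ℝ) : ℂ) * qBernoulliPoly q i 0 *
        ((qNum q x : ℝ) : ℂ) ^ (n - i) := by
  set a : ℂ := ((qNum q x : ℝ) : ℂ)
  set b : ℂ := ((q ^ x : ℝ) : ℂ)
  have hG : ContDiff ℂ n (qBernoulliPolyGen q 0) :=
    (differentiable_qBernoulliPolyGen hq0 hq1 le_rfl).contDiff
  have hfun : qBernoulliPolyGen q x =
      (fun t => qBernoulliPolyGen q 0 (b * t)) * fun t => Complex.exp (a * t) :=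
    funext (qBernoulliPolyGen_eq_mul_exp hq0 hq1.ne x)
  have hGb : ContDiff ℂ n fun t => qBernoulliPolyGen q 0 (b * t) := hG.comp (by fun_prop)
  rw [qBernoulliPoly, hfun, iteratedDeriv_mul hGb.contDiffAt (by fun_prop)]
  refine Finset.sum_congr rfl fun i hi => ?_
  rw [iteratedDeriv_comp_const_mul (hG.of_le (by exact_mod_cast Finset.mem_range_succ_iff.1 hi)),
    iteratedDeriv_cexp_const_mul, qBernoulliPoly, Real.rpow_mul hq0.le, Real.rpow_natCast]
  simp only [mul_zero, Complex.exp_zero, mul_one, Complex.ofReal_pow]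
  ring

/-- For `0 < q < 1`, real `x > 0` and `n ≥ 0`,
`β_{n,q}(x) = Σ_{i=0}^{n} C(n,i) q^{xi} β_{i,q} [x]_q^{n-i}`, where `β_{i,q} = β_{i,q}(0)`. -/
theorem qBernoulliPoly_addition (q : ℝ) (hq0 : 0 < q) (hq1 : q < 1)
    (x : ℝ) (hx : 0 < x) (n : ℕ) :
    qBernoulliPoly q n x =
    ∑ i ∈ Finset.range (n + 1),
      (n.choose i : ℂ) * ((q ^ (x * (i : ℝ)) : ℝ) : ℂ) * qBernoulliPoly q i 0 *
        ((qNum q x : ℝ) : ℂ) ^ (n - i) :=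
  qBernoulliPoly_addition_general q hq0 hq1 x n
end
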